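/- In a locally finite tiling of the plane ℝ² by convex polygons, every point that is a vertex of one polygon of the tiling is also a vertex of at least one other polygon of the tiling. -/

import Mathlib

/-!
Measure the tiles near `x`. For small `r` the ball `B(x, r)` is covered, with null overlaps, by the
tiles containing `x`. Such a tile `S ≠ T` lies in a closed half-plane through `x`, since `x` is not
interior to `S` (it lies in `T`), so it fills at most half of `B(x, r)`. If `x` is not a vertex of
`S`, then `x` is inside a segment of `S`, and `S` contains the triangle spanned by this segment and
a point of `S` off its line, hence a half-disc at `x`: it fills exactly half of `B(x, r)`. The tile
`T` fills a positive part of `B(x, r)` but strictly less than half: otherwise, being closed, it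
would contain a closed half-disc at `x`, and `x` would be the midpoint of its diameter.
So `vol B(x, r) = vol (T ∩ B(x, r)) + k vol B(x, r) / 2`, which is impossible for an integer `k`.
-/

open Set Metric

noncomputable section

abbrev Euc (n : ℕ) : Type := EuclideanSpace ℝ (Fin n)

/-- A convex polytope: the convex hull of a finite point set (equivalently, a bounded
intersection of finitely many closed halfspaces). -/
def IsPolytope {n : ℕ} (P : Set (Euc n)) : Prop :=
  ∃ V : Finset (Euc n), P = convexHull ℝ (V : Set (Euc n))

/-- A tiling of `ℝⁿ` by full-dimensional convex polytopes: the tiles cover `ℝⁿ` and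
have pairwise disjoint interiors. -/
def IsTiling {n : ℕ} (𝒯 : Set (Set (Euc n))) : Prop :=
  (∀ T ∈ 𝒯, IsPolytope T ∧ (interior T).Nonempty) ∧
  ⋃₀ 𝒯 = Set.univ ∧
  ∀ T ∈ 𝒯, ∀ T' ∈ 𝒯, T ≠ T' → interior T ∩ interior T' = ∅

/-- A collection of tiles is locally finite if every bounded set meets only finitely
many tiles. -/
def IsLocallyFinite {n : ℕ} (𝒯 : Set (Set (Euc n))) : Prop :=
  ∀ U : Set (Euc n), Bornology.IsBounded U → {T | T ∈ 𝒯 ∧ (T ∩ U).Nonempty}.Finite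

open MeasureTheory Filter Topology Module
open scoped ENNReal

theorem Convex.exists_eventually_add_smul_mem_of_notMem_extremePoints {E : Type*}
    [AddCommGroup E] [Module ℝ E] {S : Set E} (hS : Convex ℝ S) {x : E} (hxS : x ∈ S)
    (hx : x ∉ extremePoints ℝ S) :
    ∃ u ≠ 0, ∀ᶠ s in 𝓝 (0 : ℝ), x + s • u ∈ S := by
  simp only [mem_extremePoints_iff_left, hxS, true_and, not_forall] at hx
  obtain ⟨x₁, hx₁, x₂, hx₂, hseg, hx₁x⟩ := hx
  have hne : x₂ - x₁ ≠ 0 := by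
    rintro h
    rw [sub_eq_zero.1 h, openSegment_same] at hseg
    exact hx₁x hseg.symm
  rw [openSegment_eq_image_lineMap] at hseg
  obtain ⟨t₀, ⟨ht₀, ht₁⟩, rfl⟩ := hseg
  refine ⟨x₂ - x₁, hne, ?_⟩
  have hnear : ∀ᶠ s in 𝓝 (0 : ℝ), t₀ + s ∈ Icc 0 1 :=
    (continuous_const_add t₀).tendsto' 0 t₀ (add_zero t₀) |>.eventually
      (Icc_mem_nhds ht₀ ht₁)
  filter_upwards [hnear] with s hs
  have := hS.segment_subset hx₁ hx₂
    ((segment_eq_image_lineMap ℝ x₁ x₂).symm ▸ mem_image_of_mem _ hs)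
  convert this using 1
  simp only [AffineMap.lineMap_apply, vsub_eq_sub, vadd_eq_add]
  module

section HalfSpaces

variable {E : Type*} [NormedAddCommGroup E] [NormedSpace ℝ E]

theorem isOpen_ball_inter_setOf_lt (f : StrongDual ℝ E) (x : E) (r : ℝ) :
    IsOpen (ball x r ∩ {y | f y < f x}) :=
  isOpen_ball.inter (isOpen_lt f.continuous continuous_const)

theorem Convex.subset_closure_interior {S : Set E} (hS : Convex ℝ S)
    (hint : (interior S).Nonempty) : S ⊆ closure (interior S) :=
  hS.closure_interior_eq_closure_of_nonempty_interior hint ▸ subset_closure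

variable [FiniteDimensional ℝ E]

theorem Convex.exists_sub_notMem_of_interior_nonempty {S : Set E} (hS : Convex ℝ S)
    (hint : (interior S).Nonempty) (x : E) {V : Submodule ℝ E} (hV : V ≠ ⊤) :
    ∃ p ∈ S, p - x ∉ V := by
  by_contra! h
  have hle : affineSpan ℝ S ≤ AffineSubspace.mk' x V :=
    affineSpan_le.2 fun p hp => (AffineSubspace.mem_mk' ..).2 (h p hp)
  rw [hS.interior_nonempty_iff_affineSpan_eq_top.1 hint, top_le_iff] at hle
  exact hV (by simpa using congrArg AffineSubspace.direction hle)

theorem Convex.exists_eventually_le_imp_mem_of_notMem_extremePoints {S : Set E}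
    (hS : Convex ℝ S) (hint : (interior S).Nonempty) (hE : finrank ℝ E = 2) {x : E} (hxS : x ∈ S)
    (hx : x ∉ extremePoints ℝ S) :
    ∃ g : StrongDual ℝ E, ∀ᶠ y in 𝓝 x, g x ≤ g y → y ∈ S := by
  obtain ⟨u, hu0, hu⟩ := hS.exists_eventually_add_smul_mem_of_notMem_extremePoints hxS hx
  have hV : (ℝ ∙ u) ≠ ⊤ := by
    intro h
    have := finrank_span_singleton (K := ℝ) hu0
    rw [h, finrank_top, hE] at this
    norm_num at this
  obtain ⟨p, hpS, hpu⟩ := hS.exists_sub_notMem_of_interior_nonempty hint x hV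
  have hind : LinearIndependent ℝ ![p - x, u] := linearIndependent_fin2.2
    ⟨by simpa using hu0, fun a h => hpu (Submodule.mem_span_singleton.2 ⟨a, by simpa using h⟩)⟩
  let b := basisOfLinearIndependentOfCardEqFinrank hind (by simp [hE])
  let φ := b.equivFunL
  have hdecomp : ∀ v, v = φ v 0 • (p - x) + φ v 1 • u := by
    intro v
    conv_lhs => rw [← b.sum_equivFun v]
    simp [Fin.sum_univ_two, φ, b]
  -- If `y - x = t • (p - x) + c • u` with `0 ≤ t < 1`, then
  -- `y = (1 - t) • (x + (c / (1 - t)) • u) + t • p`.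
  refine ⟨(ContinuousLinearMap.proj 0).comp φ.toContinuousLinearMap, ?_⟩
  have hφ : Tendsto (fun y => φ (y - x)) (𝓝 x) (𝓝 0) :=
    (φ.continuous.comp (continuous_sub_right x)).tendsto' x 0 (by simp)
  have ht : Tendsto (fun y => φ (y - x) 0) (𝓝 x) (𝓝 0) :=
    ((continuous_apply 0).tendsto _).comp hφ
  have hc : Tendsto (fun y => φ (y - x) 1 / (1 - φ (y - x) 0)) (𝓝 x) (𝓝 0) := by
    have := (((continuous_apply 1).tendsto _).comp hφ).div (tendsto_const_nhds.sub ht)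
      (by norm_num : (1 : ℝ) - 0 ≠ 0)
    rwa [sub_zero, Pi.zero_apply, zero_div] at this
  filter_upwards [hc.eventually hu, ht.eventually (gt_mem_nhds one_pos)] with y hyu hy1 hgy
  have ht0 : 0 ≤ φ (y - x) 0 := by simpa [map_sub] using hgy
  have := hS hyu hpS (sub_nonneg.2 hy1.le) ht0 (by ring)
  convert this using 1
  rw [smul_add, smul_smul, mul_div_cancel₀ _ (sub_pos.2 hy1).ne']
  linear_combination (norm := module) hdecomp (y - x)

theorem notMem_extremePoints_of_ball_inter_setOf_lt_subset {S : Set E} (hSc : IsClosed S)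
    (hE : 1 < finrank ℝ E) {f : StrongDual ℝ E} (hf : f ≠ 0) {x : E} {r : ℝ} (hr : 0 < r)
    (h : ball x r ∩ {y | f y < f x} ⊆ S) : x ∉ extremePoints ℝ S := by
  have hclosed : ball x r ∩ {y | f y ≤ f x} ⊆ S :=
    calc ball x r ∩ {y | f y ≤ f x} = ball x r ∩ f ⁻¹' closure (Iio (f x)) := by
          rw [closure_Iio]; rfl
      _ = ball x r ∩ closure {y | f y < f x} := by
          rw [(f.isOpenMap_of_ne_zero hf).preimage_closure_eq_closure_preimage f.continuous]; rfl
      _ ⊆ closure (ball x r ∩ {y | f y < f x}) := isOpen_ball.inter_closure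
      _ ⊆ S := closure_minimal h hSc
  obtain ⟨u, hu, hu0⟩ := Submodule.exists_mem_ne_zero_of_ne_bot
    (LinearMap.ker_ne_bot_of_finrank_lt (f := (f : E →ₗ[ℝ] ℝ)) (by simpa using hE))
  set v := (r / 2 / ‖u‖) • u
  have hv : ‖v‖ = r / 2 := by
    simp [v, norm_smul, abs_of_pos hr, norm_ne_zero_iff.2 hu0]
  have hfv : f v = 0 := by simpa [v] using Or.inr hu
  have hmem : ∀ w, ‖w‖ = r / 2 → f w = 0 → x + w ∈ S := fun w hw hfw =>
    hclosed ⟨by simp [hw, hr], by simp [hfw]⟩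
  intro hx
  have hxv := hx.2 (hmem (-v) (by rwa [norm_neg]) (by simp [hfv])) (hmem v hv hfv)
    (by simpa [← sub_eq_add_neg] using mem_openSegment_sub_add x v)
  have : ‖v‖ = 0 := by simpa using hxv
  linarith

variable [MeasurableSpace E] [BorelSpace E] (μ : Measure E) [μ.IsAddHaarMeasure]

theorem addHaar_ball_inter_setOf_lt_swap (f : StrongDual ℝ E) (x : E) (r : ℝ) :
    μ (ball x r ∩ {y | f x < f y}) = μ (ball x r ∩ {y | f y < f x}) := by
  have hreflect : ball x r ∩ {y | f x < f y} =
      (fun y => (x + x) - y) ⁻¹' (ball x r ∩ {y | f y < f x}) := by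
    ext y
    simp only [mem_inter_iff, mem_ball, mem_ofPred_eq, mem_preimage, map_sub, map_add,
      dist_eq_norm, show x + x - y - x = -(y - x) by abel, norm_neg]
    constructor <;> rintro ⟨h₁, h₂⟩ <;> exact ⟨h₁, by linarith⟩
  rw [hreflect, (μ.measurePreserving_sub_left (x + x)).measure_preimage
    (isOpen_ball_inter_setOf_lt f x r).measurableSet.nullMeasurableSet]

theorem two_mul_addHaar_ball_inter_setOf_lt_le (f : StrongDual ℝ E) (x : E) (r : ℝ) :
    2 * μ (ball x r ∩ {y | f y < f x}) ≤ μ (ball x r) := by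
  have hdisj : Disjoint (ball x r ∩ {y | f y < f x}) (ball x r ∩ {y | f x < f y}) :=
    disjoint_left.2 fun _ h₁ h₂ => lt_asymm (α := ℝ) h₁.2 h₂.2
  calc 2 * μ (ball x r ∩ {y | f y < f x})
      = μ (ball x r ∩ {y | f y < f x}) + μ (ball x r ∩ {y | f x < f y}) := by
        rw [two_mul, addHaar_ball_inter_setOf_lt_swap]
    _ = μ ((ball x r ∩ {y | f y < f x}) ∪ (ball x r ∩ {y | f x < f y})) :=
        (measure_union hdisj
          (isOpen_ball.inter (isOpen_lt continuous_const f.continuous)).measurableSet).symm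
    _ ≤ μ (ball x r) := measure_mono (union_subset inter_subset_left inter_subset_left)

theorem addHaar_ball_le_two_mul_addHaar_ball_inter_setOf_le (f : StrongDual ℝ E) (x : E)
    (r : ℝ) : μ (ball x r) ≤ 2 * μ (ball x r ∩ {y | f x ≤ f y}) := by
  have hcover : ball x r ⊆ (ball x r ∩ {y | f x ≤ f y}) ∪ (ball x r ∩ {y | f y < f x}) :=
    fun y hy => (le_or_gt (f x) (f y)).imp (⟨hy, ·⟩) (⟨hy, ·⟩)
  calc μ (ball x r)
      ≤ μ (ball x r ∩ {y | f x ≤ f y}) + μ (ball x r ∩ {y | f y < f x}) :=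
        (measure_mono hcover).trans (measure_union_le _ _)
    _ = μ (ball x r ∩ {y | f x ≤ f y}) + μ (ball x r ∩ {y | f x < f y}) := by
        rw [addHaar_ball_inter_setOf_lt_swap]
    _ ≤ 2 * μ (ball x r ∩ {y | f x ≤ f y}) := by
        rw [two_mul]
        gcongr _ + μ (_ ∩ ?_)
        exact fun y (hy : f x < f y) => hy.le

theorem Convex.addHaar_interior_inter {S : Set E} (hS : Convex ℝ S) (t : Set E) :
    μ (interior S ∩ t) = μ (S ∩ t) := by
  refine le_antisymm (measure_mono (inter_subset_inter_left _ interior_subset)) ?_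
  rw [← measure_sdiff_null (hS.addHaar_frontier μ), ← self_sdiff_frontier]
  exact measure_mono fun y ⟨⟨hyS, hyt⟩, hyf⟩ => ⟨⟨hyS, hyf⟩, hyt⟩

theorem Convex.addHaar_inter_ball_pos {S : Set E} (hS : Convex ℝ S)
    (hint : (interior S).Nonempty) {x : E} (hxS : x ∈ S) {r : ℝ} (hr : 0 < r) :
    0 < μ (S ∩ ball x r) := by
  obtain ⟨y, hyB, hyS⟩ :=
    mem_closure_iff.1 (hS.subset_closure_interior hint hxS) _ isOpen_ball (mem_ball_self hr)
  rw [← hS.addHaar_interior_inter μ]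
  exact (isOpen_interior.inter isOpen_ball).measure_pos μ ⟨y, hyS, hyB⟩

theorem Convex.two_mul_addHaar_inter_ball_le {S : Set E} (hS : Convex ℝ S) {x : E}
    (hx : x ∉ interior S) (r : ℝ) :
    2 * μ (S ∩ ball x r) ≤ μ (ball x r) := by
  obtain ⟨f, hf⟩ := geometric_hahn_banach_open_point hS.interior isOpen_interior hx
  calc 2 * μ (S ∩ ball x r) = 2 * μ (interior S ∩ ball x r) := by
        rw [hS.addHaar_interior_inter μ]
    _ ≤ 2 * μ (ball x r ∩ {y | f y < f x}) := by
        gcongr 2 * μ ?_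
        exact fun y ⟨hyS, hyB⟩ => ⟨hyB, hf y hyS⟩
    _ ≤ μ (ball x r) := two_mul_addHaar_ball_inter_setOf_lt_le μ f x r

theorem Convex.two_mul_addHaar_inter_ball_lt {S : Set E} (hS : Convex ℝ S) (hSc : IsClosed S)
    (hint : (interior S).Nonempty) (hE : 1 < finrank ℝ E) {x : E} (hx : x ∈ extremePoints ℝ S)
    {r : ℝ} (hr : 0 < r) :
    2 * μ (S ∩ ball x r) < μ (ball x r) := by
  have : Nontrivial E := Module.nontrivial_of_finrank_pos (R := ℝ) (by omega)
  have hxint : x ∉ interior S := (disjoint_interior_extremePoints S).notMem_of_mem_right hx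
  obtain ⟨f, hf⟩ := geometric_hahn_banach_open_point hS.interior isOpen_interior hxint
  have hf0 : f ≠ 0 := by
    rintro rfl
    obtain ⟨p, hp⟩ := hint
    simpa using hf p hp
  set H := ball x r ∩ {y | f y < f x}
  obtain ⟨y, hyH, hyS⟩ := not_subset.1 fun h =>
    notMem_extremePoints_of_ball_inter_setOf_lt_subset hSc hE hf0 hr h hx
  have hgap : μ (H \ S) ≠ 0 :=
    (((isOpen_ball_inter_setOf_lt f x r).sdiff hSc).measure_pos μ ⟨y, hyH, hyS⟩).ne'
  have hinterior : interior S ∩ ball x r ⊆ H := fun y ⟨hyS, hyB⟩ => ⟨hyB, hf y hyS⟩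
  have hfinite : μ (interior S ∩ ball x r) ≠ ⊤ :=
    (measure_mono inter_subset_right).trans_lt measure_ball_lt_top |>.ne
  have hlt : μ (interior S ∩ ball x r) < μ H :=
    calc μ (interior S ∩ ball x r)
        < μ (interior S ∩ ball x r) + μ (H \ S) := ENNReal.lt_add_right hfinite hgap
      _ = μ ((interior S ∩ ball x r) ∪ (H \ S)) :=
          (measure_union (disjoint_left.2 fun _ hy hy' => hy'.2 (interior_subset hy.1))
            ((isOpen_ball_inter_setOf_lt f x r).sdiff hSc).measurableSet).symm
      _ ≤ μ H := measure_mono (union_subset hinterior sdiff_subset)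
  calc 2 * μ (S ∩ ball x r) = 2 * μ (interior S ∩ ball x r) := by
        rw [hS.addHaar_interior_inter μ]
    _ < 2 * μ H := by gcongr; simp
    _ ≤ μ (ball x r) := two_mul_addHaar_ball_inter_setOf_lt_le μ f x r

theorem Convex.eventually_addHaar_ball_le_two_mul_addHaar_inter_ball {S : Set E}
    (hS : Convex ℝ S) (hint : (interior S).Nonempty) (hE : finrank ℝ E = 2) {x : E}
    (hxS : x ∈ S) (hx : x ∉ extremePoints ℝ S) :
    ∀ᶠ r in 𝓝[>] 0, μ (ball x r) ≤ 2 * μ (S ∩ ball x r) := by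
  obtain ⟨g, hg⟩ := hS.exists_eventually_le_imp_mem_of_notMem_extremePoints hint hE hxS hx
  obtain ⟨ε, hε, hball⟩ := Metric.eventually_nhds_iff_ball.1 hg
  filter_upwards [Ioo_mem_nhdsGT hε] with r hr
  calc μ (ball x r) ≤ 2 * μ (ball x r ∩ {y | g x ≤ g y}) :=
        addHaar_ball_le_two_mul_addHaar_ball_inter_setOf_le μ g x r
    _ ≤ 2 * μ (S ∩ ball x r) := by
        gcongr 2 * μ ?_
        exact fun y ⟨hyB, hgy⟩ => ⟨hball y (ball_subset_ball hr.2.le hyB) hgy, hyB⟩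

end HalfSpaces

theorem ENNReal.two_mul_ne_two_mul_add_natCast_mul {a m : ℝ≥0∞} (hm : m ≠ ∞) (ha₀ : a ≠ 0)
    (ha : 2 * a < m) (k : ℕ) : 2 * m ≠ 2 * a + k * m := by
  lift m to NNReal using hm
  lift a to NNReal using
    (ENNReal.lt_top_of_mul_ne_top_right ((ha.trans ENNReal.coe_lt_top).ne) two_ne_zero).ne
  intro h
  norm_cast at ha₀ ha h
  have ha₀' : (0 : ℝ) < a := by positivity
  have ha' : 2 * (a : ℝ) < m := by exact_mod_cast ha
  have h' := congrArg NNReal.toReal h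
  rcases k with _ | _ | k <;> push_cast at h' <;> nlinarith [m.2]

theorem sUnion_setOf_mem_mem_nhds {X : Type*} [TopologicalSpace X] {𝒯 : Set (Set X)}
    (hcover : ⋃₀ 𝒯 = univ) (hclosed : ∀ S ∈ 𝒯, IsClosed S)
    (hlf : LocallyFinite fun S : 𝒯 => (S : Set X)) (x : X) :
    ⋃₀ {S ∈ 𝒯 | x ∈ S} ∈ 𝓝 x := by
  filter_upwards [hlf.iInter_compl_mem_nhds (fun S => hclosed S S.2) x] with y hy
  obtain ⟨S, hS, hyS⟩ := mem_sUnion.1 (hcover ▸ mem_univ y)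
  refine ⟨S, ⟨hS, ?_⟩, hyS⟩
  by_contra hxS
  exact mem_iInter₂.1 hy ⟨S, hS⟩ hxS hyS

section Tiling

variable {n : ℕ} {𝒯 : Set (Set (Euc n))} {S T : Set (Euc n)}

theorem IsPolytope.convex (h : IsPolytope S) : Convex ℝ S := by
  obtain ⟨V, rfl⟩ := h
  exact convex_convexHull ℝ _

theorem IsPolytope.isClosed (h : IsPolytope S) : IsClosed S := by
  obtain ⟨V, rfl⟩ := h
  exact (V.finite_toSet.isCompact_convexHull (𝕜 := ℝ)).isClosed

theorem IsTiling.convex (h : IsTiling 𝒯) (hS : S ∈ 𝒯) : Convex ℝ S := (h.1 S hS).1.convex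

theorem IsTiling.isClosed (h : IsTiling 𝒯) (hS : S ∈ 𝒯) : IsClosed S := (h.1 S hS).1.isClosed

theorem IsTiling.interior_nonempty (h : IsTiling 𝒯) (hS : S ∈ 𝒯) : (interior S).Nonempty :=
  (h.1 S hS).2

theorem IsTiling.notMem_interior (h : IsTiling 𝒯) (hS : S ∈ 𝒯) (hT : T ∈ 𝒯) (hST : S ≠ T)
    {x : Euc n} (hxT : x ∈ T) : x ∉ interior S := by
  intro hxS
  obtain ⟨y, hyS, hyT⟩ := mem_closure_iff.1
    ((h.convex hT).subset_closure_interior (h.interior_nonempty hT) hxT) _ isOpen_interior hxS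
  exact (h.2.2 S hS T hT hST).subset ⟨hyS, hyT⟩

theorem IsTiling.volume_inter_eq_zero (h : IsTiling 𝒯) (hS : S ∈ 𝒯) (hT : T ∈ 𝒯)
    (hST : S ≠ T) : volume (S ∩ T) = 0 := by
  rw [← (h.convex hS).addHaar_interior_inter volume, inter_comm,
    ← (h.convex hT).addHaar_interior_inter volume,
    inter_comm, h.2.2 S hS T hT hST, measure_empty]

theorem IsTiling.volume_eq_sum_inter (h : IsTiling 𝒯) {G : Set (Set (Euc n))} (hG : G.Finite)
    (hG𝒯 : G ⊆ 𝒯) {U : Set (Euc n)} (hU : U ⊆ ⋃₀ G) (hUm : MeasurableSet U) :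
    volume U = ∑ S ∈ hG.toFinset, volume (S ∩ U) := by
  rw [sUnion_eq_biUnion, ← hG.coe_toFinset, Finset.set_biUnion_coe] at hU
  rw [← measure_biUnion_finset₀, ← iUnion₂_inter, inter_eq_right.2 hU]
  · exact fun S hS S' hS' hne => measure_mono_null
      (inter_subset_inter inter_subset_left inter_subset_left)
      (h.volume_inter_eq_zero (hG𝒯 (hG.mem_toFinset.1 hS)) (hG𝒯 (hG.mem_toFinset.1 hS')) hne)
  · exact fun S hS =>
      ((h.isClosed (hG𝒯 (hG.mem_toFinset.1 hS))).measurableSet.inter hUm).nullMeasurableSet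

theorem IsLocallyFinite.locallyFinite (h : IsLocallyFinite 𝒯) :
    LocallyFinite fun S : 𝒯 => (S : Set (Euc n)) := fun x =>
  ⟨ball x 1, ball_mem_nhds x one_pos,
    ((h _ isBounded_ball).preimage Subtype.val_injective.injOn).subset fun S hS => ⟨S.2, hS⟩⟩

theorem IsTiling.eventually_ball_subset_sUnion (h : IsTiling 𝒯) (hlf : IsLocallyFinite 𝒯)
    (x : Euc n) : ∀ᶠ r in 𝓝[>] 0, ball x r ⊆ ⋃₀ {S ∈ 𝒯 | x ∈ S} := by
  obtain ⟨ε, hε, hball⟩ := Metric.mem_nhds_iff.1 <|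
    sUnion_setOf_mem_mem_nhds h.2.1 (fun S hS => h.isClosed hS) hlf.locallyFinite x
  filter_upwards [Ioo_mem_nhdsGT hε] with r hr
  exact (ball_subset_ball hr.2.le).trans hball

end Tiling

theorem IsTiling.eventually_two_mul_volume_inter_ball_eq {𝒯 : Set (Set (Euc 2))}
    {S T : Set (Euc 2)} (h : IsTiling 𝒯) (hS : S ∈ 𝒯) (hT : T ∈ 𝒯) (hST : S ≠ T) {x : Euc 2}
    (hxS : x ∈ S) (hxT : x ∈ T) (hx : x ∉ extremePoints ℝ S) :
    ∀ᶠ r in 𝓝[>] 0, 2 * volume (S ∩ ball x r) = volume (ball x r) := by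
  filter_upwards [(h.convex hS).eventually_addHaar_ball_le_two_mul_addHaar_inter_ball volume
    (h.interior_nonempty hS) finrank_euclideanSpace_fin hxS hx] with r hr
  exact le_antisymm ((h.convex hS).two_mul_addHaar_inter_ball_le volume
    (h.notMem_interior hS hT hST hxT) r) hr

theorem no_lonely_vertex_plane (𝒯 : Set (Set (Euc 2)))
    (h𝒯 : IsTiling 𝒯) (hlf : IsLocallyFinite 𝒯)
    (x : Euc 2) (T : Set (Euc 2)) (hT : T ∈ 𝒯) (hx : x ∈ extremePoints ℝ T) :
    ∃ T' ∈ 𝒯, T' ≠ T ∧ x ∈ extremePoints ℝ T' := by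
  by_contra! hlonely
  set G := {S | S ∈ 𝒯 ∧ x ∈ S}
  have hG : G.Finite := by simpa [G] using hlf {x} Bornology.isBounded_singleton
  have hTG : T ∈ hG.toFinset := hG.mem_toFinset.2 ⟨hT, hx.1⟩
  have hhalf : ∀ᶠ r in 𝓝[>] 0, ∀ S ∈ hG.toFinset.erase T,
      2 * volume (S ∩ ball x r) = volume (ball x r) := by
    refine (eventually_all_finset _).2 fun S hS => ?_
    obtain ⟨hST, hS𝒯, hxS⟩ : S ≠ T ∧ S ∈ 𝒯 ∧ x ∈ S := by simpa [G] using hS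
    exact h𝒯.eventually_two_mul_volume_inter_ball_eq hS𝒯 hT hST hxS hx.1 (hlonely S hS𝒯 hST)
  obtain ⟨r, hrcover, hrhalf, hr⟩ :=
    ((h𝒯.eventually_ball_subset_sUnion hlf x).and (hhalf.and self_mem_nhdsWithin)).exists
  refine ENNReal.two_mul_ne_two_mul_add_natCast_mul measure_ball_lt_top.ne
    ((h𝒯.convex hT).addHaar_inter_ball_pos volume (h𝒯.interior_nonempty hT) hx.1 hr).ne'
    ((h𝒯.convex hT).two_mul_addHaar_inter_ball_lt volume (h𝒯.isClosed hT)
      (h𝒯.interior_nonempty hT) (by simp) hx hr) (hG.toFinset.erase T).card ?_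
  calc 2 * volume (ball x r)
      = 2 * volume (T ∩ ball x r) + ∑ S ∈ hG.toFinset.erase T, 2 * volume (S ∩ ball x r) := by
        rw [h𝒯.volume_eq_sum_inter hG (fun S hS => hS.1) hrcover measurableSet_ball,
          ← Finset.add_sum_erase _ _ hTG, mul_add, Finset.mul_sum]
    _ = 2 * volume (T ∩ ball x r) + (hG.toFinset.erase T).card * volume (ball x r) := by
        rw [Finset.sum_congr rfl hrhalf, Finset.sum_const, nsmul_eq_mul]
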